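/- arXiv:math/0509398 — 7 statements merged into one kernel-verified Lean document; each statement's English description precedes it below -/
import Mathlib

section
/- If (z,w) ∈ P and w ≠ 0, then s₁(z,w) = (conj z, conj z / conj w) again lies in P; that is, the symmetry s₁ maps the Bolza curve to itself. -/
noncomputable section
open Complex ComplexConjugate

/-- `α = exp(iπ/4)`. -/
def bolzaAlpha : ℂ := Complex.exp (Real.pi * Complex.I / 4)

/-- `β = exp(3iπ/4)`. -/
def bolzaBeta : ℂ := Complex.exp (3 * Real.pi * Complex.I / 4)

/-- The affine Bolza curve `P = {(z,w) : w²(z+α)(z+β) = z(z−α)(z−β)}`. -/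
def BolzaCurve : Set (ℂ × ℂ) :=
  {p | p.2 ^ 2 * (p.1 + bolzaAlpha) * (p.1 + bolzaBeta)
       = p.1 * (p.1 - bolzaAlpha) * (p.1 - bolzaBeta)}

/-- The symmetry `s₁(z,w) = (conj z, conj z / conj w)`. -/
def s1 (p : ℂ × ℂ) : ℂ × ℂ := (conj p.1, conj p.1 / conj p.2)

/-- The symmetry `s₂(z,w) = (−conj z, i·conj w)`. -/
def s2 (p : ℂ × ℂ) : ℂ × ℂ := (-conj p.1, Complex.I * conj p.2)

/-- The symmetry `s₃(z,w) = (1/conj z, conj w / conj z)`. -/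
def s3 (p : ℂ × ℂ) : ℂ × ℂ := (1 / conj p.1, conj p.2 / conj p.1)

/-- The hyperelliptic involution `T(z,w) = (z,−w)`. -/
def hypT (p : ℂ × ℂ) : ℂ × ℂ := (p.1, -p.2)

lemma conj_bolzaAlpha : conj bolzaAlpha = -bolzaBeta := by
  rw [bolzaAlpha, bolzaBeta, ← Complex.exp_conj]
  have : conj (↑Real.pi * Complex.I / 4) =
      3 * Real.pi * Complex.I / 4 - Real.pi * Complex.I := by
    simp [map_div₀, map_ofNat]
    ring
  rw [this, Complex.exp_sub, Complex.exp_pi_mul_I]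
  ring

lemma conj_bolzaBeta : conj bolzaBeta = -bolzaAlpha := by
  rw [bolzaAlpha, bolzaBeta, ← Complex.exp_conj]
  have : conj (3 * ↑Real.pi * Complex.I / 4) =
      Real.pi * Complex.I / 4 - Real.pi * Complex.I := by
    simp [map_div₀, map_ofNat]
    ring
  rw [this, Complex.exp_sub, Complex.exp_pi_mul_I]
  ring

/-- If `(z,w) ∈ P` and `w ≠ 0`, then `s₁(z,w)` again lies in `P`. -/
theorem s1_maps_bolza_to_itself (z w : ℂ) (hP : (z, w) ∈ BolzaCurve) (hw : w ≠ 0) :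
    s1 (z, w) ∈ BolzaCurve := by
  have hwc : (conj w : ℂ) ≠ 0 := by simpa using hw
  have h := congrArg conj hP
  simp only [BolzaCurve, Set.mem_setOf_eq, map_mul, map_sub, map_add, map_pow,
    conj_bolzaAlpha, conj_bolzaBeta] at h ⊢
  simp only [s1]
  field_simp
  linear_combination -(conj z) * h

end
end

section
/- If (z,w) ∈ P and z ≠ 0, then s₃(z,w) = (1/conj z, conj w / conj z) again lies in P; that is, the symmetry s₃ maps the Bolza curve to itself. -/
/-! Since `α` and `β` lie on the unit circle, conjugating the equation of `P` gives the same
equation with `α⁻¹, β⁻¹` in place of `α, β`, and the substitution `(z, w) ↦ (1/z, w/z)`, after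
clearing denominators, turns that equation back into the one with `α, β`. -/

noncomputable section
open Complex ComplexConjugate

def BolzaTypeCurve {K : Type*} [CommRing K] (a b : K) : Set (K × K) :=
  {p | p.2 ^ 2 * (p.1 + a) * (p.1 + b) = p.1 * (p.1 - a) * (p.1 - b)}

theorem bolzaCurve_eq : BolzaCurve = BolzaTypeCurve bolzaAlpha bolzaBeta := rfl

theorem map_mem_bolzaTypeCurve {K L : Type*} [CommRing K] [CommRing L] (σ : K →+* L)
    {a b : K} {p : K × K} (hp : p ∈ BolzaTypeCurve a b) :
    Prod.map σ σ p ∈ BolzaTypeCurve (σ a) (σ b) := by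
  simpa only [BolzaTypeCurve, Set.mem_ofPred_eq, Prod.map_fst, Prod.map_snd, map_mul, map_pow,
    map_add, map_sub] using congrArg σ hp

/-- At `z = 0` the junk values `0⁻¹ = 0` and `w / 0 = 0` send `(z, w)` to `(0, 0)`, which lies on
every such curve. -/
theorem inv_mem_bolzaTypeCurve {K : Type*} [Field K] {a b : K} (ha : a ≠ 0) (hb : b ≠ 0)
    {z w : K} (hp : (z, w) ∈ BolzaTypeCurve a⁻¹ b⁻¹) :
    (z⁻¹, w / z) ∈ BolzaTypeCurve a b := by
  simp only [BolzaTypeCurve, Set.mem_ofPred_eq] at hp ⊢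
  rcases eq_or_ne z 0 with rfl | hz
  · simp
  · field_simp at hp ⊢
    linear_combination hp

theorem conj_exp_eq_inv {x : ℂ} (hx : conj x = -x) : conj (exp x) = (exp x)⁻¹ := by
  rw [← exp_conj, hx, exp_neg]

theorem conj_bolzaAlpha_s2 : conj bolzaAlpha = bolzaAlpha⁻¹ :=
  conj_exp_eq_inv (by simp only [map_div₀, map_mul, conj_ofReal, conj_I, map_ofNat]; ring)

theorem conj_bolzaBeta_s2 : conj bolzaBeta = bolzaBeta⁻¹ :=
  conj_exp_eq_inv (by simp only [map_div₀, map_mul, conj_ofReal, conj_I, map_ofNat]; ring)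

theorem s3_maps_bolza_to_itself_general (z w : ℂ) (hP : (z, w) ∈ BolzaCurve) :
    s3 (z, w) ∈ BolzaCurve := by
  have hconj : (conj z, conj w) ∈ BolzaTypeCurve bolzaAlpha⁻¹ bolzaBeta⁻¹ := by
    rw [← conj_bolzaAlpha_s2, ← conj_bolzaBeta_s2]
    exact map_mem_bolzaTypeCurve (starRingEnd ℂ) (p := (z, w)) (bolzaCurve_eq ▸ hP)
  rw [s3, one_div, bolzaCurve_eq]
  exact inv_mem_bolzaTypeCurve (exp_ne_zero _) (exp_ne_zero _) hconj

/-- If `(z,w) ∈ P` and `z ≠ 0`, then `s₃(z,w)` again lies in `P`. -/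
theorem s3_maps_bolza_to_itself (z w : ℂ) (hP : (z, w) ∈ BolzaCurve) (hz : z ≠ 0) :
    s3 (z, w) ∈ BolzaCurve :=
  s3_maps_bolza_to_itself_general z w hP

end
end

section
/- On any connected piece of the preimage of the real axis, the symmetry s₁ acts uniformly: if B ⊆ P is a preconnected set such that every (z,w) ∈ B has z real (conj z = z) and w ≠ 0, then either s₁(p) = p for every p ∈ B, or s₁(p) = T(p) for every p ∈ B. -/
noncomputable section
open Complex ComplexConjugate

lemma bolzaAlpha_im_pos : 0 < bolzaAlpha.im := by
  rw [bolzaAlpha, Complex.exp_im]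
  have h1 : ((Real.pi : ℂ) * Complex.I / 4).re = 0 := by simp
  have h2 : ((Real.pi : ℂ) * Complex.I / 4).im = Real.pi / 4 := by simp
  rw [h1, h2]
  have hs : 0 < Real.sin (Real.pi / 4) :=
    Real.sin_pos_of_pos_of_lt_pi (by positivity) (by linarith [Real.pi_pos])
  exact mul_pos (Real.exp_pos 0) hs

lemma bolzaBeta_im_pos : 0 < bolzaBeta.im := by
  rw [bolzaBeta, Complex.exp_im]
  have h1 : (3 * (Real.pi : ℂ) * Complex.I / 4).re = 0 := by simp
  have h2 : (3 * (Real.pi : ℂ) * Complex.I / 4).im = 3 * Real.pi / 4 := by simp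
  rw [h1, h2]
  have hs : 0 < Real.sin (3 * Real.pi / 4) :=
    Real.sin_pos_of_pos_of_lt_pi (by positivity) (by linarith [Real.pi_pos])
  exact mul_pos (Real.exp_pos 0) hs

/-- The key pointwise dichotomy: on the curve, over a real `z` with `w ≠ 0`,
either `z = w * conj w` or `z = -(w * conj w)`, and `z ≠ 0`. -/
lemma bolza_key {z w : ℂ} (hP : w ^ 2 * (z + bolzaAlpha) * (z + bolzaBeta)
      = z * (z - bolzaAlpha) * (z - bolzaBeta))
    (hz : conj z = z) (hw : w ≠ 0) :
    z ≠ 0 ∧ (z = w * conj w ∨ z = -(w * conj w)) := by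
  have hzim : z.im = 0 := by
    have := Complex.conj_eq_iff_im.mp hz
    exact this
  have hα : bolzaAlpha ≠ 0 := Complex.exp_ne_zero _
  have hβ : bolzaBeta ≠ 0 := Complex.exp_ne_zero _
  have hz0 : z ≠ 0 := by
    intro h0
    rw [h0] at hP
    have hP3 : w ^ 2 * (bolzaAlpha * bolzaBeta) = 0 := by linear_combination hP
    rcases mul_eq_zero.mp hP3 with h | h
    · exact hw ((pow_eq_zero_iff two_ne_zero).mp h)
    · rcases mul_eq_zero.mp h with h2 | h2
      · exact hα h2
      · exact hβ h2
  refine ⟨hz0, ?_⟩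
  -- the four factors are nonzero since z is real, α, β are not
  have hne : ∀ c : ℂ, 0 < c.im → (z + c ≠ 0 ∧ z - c ≠ 0) := by
    intro c hc
    constructor <;> intro h
    · have : (z + c).im = 0 := by rw [h]; simp
      simp [Complex.add_im, hzim] at this
      linarith
    · have : (z - c).im = 0 := by rw [h]; simp
      simp [Complex.sub_im, hzim] at this
      linarith
  obtain ⟨ha1, ha2⟩ := hne bolzaAlpha bolzaAlpha_im_pos
  obtain ⟨hb1, hb2⟩ := hne bolzaBeta bolzaBeta_im_pos
  -- conjugate equation
  have hP2 : (conj w) ^ 2 * (z - bolzaBeta) * (z - bolzaAlpha)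
      = z * (z + bolzaBeta) * (z + bolzaAlpha) := by
    have := congrArg (fun x => conj x) hP
    simp only [map_mul, map_pow, map_add, map_sub, hz, conj_bolzaAlpha, conj_bolzaBeta] at this
    linear_combination this
  have hD : (z + bolzaAlpha) * (z + bolzaBeta) * (z - bolzaAlpha) * (z - bolzaBeta) ≠ 0 :=
    mul_ne_zero (mul_ne_zero (mul_ne_zero ha1 hb1) ha2) hb2
  have hsq : (w * conj w) ^ 2 = z ^ 2 := by
    have hkey : (w * conj w) ^ 2
          * ((z + bolzaAlpha) * (z + bolzaBeta) * (z - bolzaAlpha) * (z - bolzaBeta))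
        = z ^ 2 * ((z + bolzaAlpha) * (z + bolzaBeta) * (z - bolzaAlpha) * (z - bolzaBeta)) := by
      linear_combination ((conj w) ^ 2 * (z - bolzaAlpha) * (z - bolzaBeta)) * hP
        + (z * (z - bolzaAlpha) * (z - bolzaBeta)) * hP2
    exact mul_right_cancel₀ hD hkey
  have hfac : (w * conj w - z) * (w * conj w + z) = 0 := by linear_combination hsq
  rcases mul_eq_zero.mp hfac with h | h
  · left; linear_combination -h
  · right; linear_combination h

/-- On any preconnected subset of the Bolza curve lying over the real axis and
avoiding `w = 0`, the symmetry `s₁` acts uniformly: it is either the identity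
on all of it, or the hyperelliptic involution `T` on all of it. -/
theorem s1_uniform_on_preconnected (B : Set (ℂ × ℂ)) (hBP : B ⊆ BolzaCurve)
    (hconn : IsPreconnected B)
    (hreal : ∀ p ∈ B, conj p.1 = p.1 ∧ p.2 ≠ 0) :
    (∀ p ∈ B, s1 p = p) ∨ (∀ p ∈ B, s1 p = hypT p) := by
  set u : Set (ℂ × ℂ) := {p | 0 < p.1.re} with hu_def
  set v : Set (ℂ × ℂ) := {p | p.1.re < 0} with hv_def
  have hu : IsOpen u :=
    (Complex.continuous_re.comp continuous_fst).isOpen_preimage (Set.Ioi 0) isOpen_Ioi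
  have hv : IsOpen v :=
    (Complex.continuous_re.comp continuous_fst).isOpen_preimage (Set.Iio 0) isOpen_Iio
  have hdisj : Disjoint u v := by
    rw [Set.disjoint_left]
    intro p hp hp'
    have h1 : 0 < p.1.re := hp
    have h2 : p.1.re < 0 := hp'
    linarith
  have hmem : ∀ p ∈ B, (p ∈ u → p.1 = p.2 * conj p.2) ∧
      (p ∈ v → p.1 = -(p.2 * conj p.2)) ∧ p ∈ u ∪ v := by
    intro p hp
    obtain ⟨hz, hw⟩ := hreal p hp
    obtain ⟨h0, hd⟩ := bolza_key (hBP hp) hz hw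
    have hns : 0 < Complex.normSq p.2 := Complex.normSq_pos.mpr hw
    have hcc : p.2 * conj p.2 = (Complex.normSq p.2 : ℂ) := Complex.mul_conj p.2
    have hre1 : (p.2 * conj p.2).re = Complex.normSq p.2 := by rw [hcc]; simp
    have hre2 : (-(p.2 * conj p.2)).re = -Complex.normSq p.2 := by
      rw [Complex.neg_re, hre1]
    refine ⟨?_, ?_, ?_⟩
    · intro hpu
      have hpu' : 0 < p.1.re := hpu
      rcases hd with h | h
      · exact h
      · exfalso
        rw [h] at hpu'
        rw [hre2] at hpu'
        linarith
    · intro hpv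
      have hpv' : p.1.re < 0 := hpv
      rcases hd with h | h
      · exfalso
        rw [h] at hpv'
        rw [hre1] at hpv'
        linarith
      · exact h
    · rcases hd with h | h
      · left
        show 0 < p.1.re
        rw [h, hre1]
        exact hns
      · right
        show p.1.re < 0
        rw [h, hre2]
        linarith
  rcases hconn.subset_or_subset hu hv hdisj (fun p hp => (hmem p hp).2.2) with hB | hB
  · left
    intro p hp
    obtain ⟨hz, hw⟩ := hreal p hp
    have hzw := (hmem p hp).1 (hB hp)
    have hcw : conj p.2 ≠ 0 := by simpa using hw
    unfold s1
    refine Prod.ext hz ?_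
    show conj p.1 / conj p.2 = p.2
    rw [hz, hzw]
    field_simp
  · right
    intro p hp
    obtain ⟨hz, hw⟩ := hreal p hp
    have hzw := (hmem p hp).2.1 (hB hp)
    have hcw : conj p.2 ≠ 0 := by simpa using hw
    unfold s1 hypT
    refine Prod.ext hz ?_
    show conj p.1 / conj p.2 = -p.2
    rw [hz, hzw]
    field_simp

end
end

section
/- On any connected piece of the preimage of the unit circle, the symmetry s₃ acts uniformly: if B ⊆ P is a preconnected set such that every (z,w) ∈ B has |z| = 1 (z·conj z = 1) and w ≠ 0, then either s₃(p) = p for every p ∈ B, or s₃(p) = T(p) for every p ∈ B. -/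
/-!
On the unit circle `conj = (·)⁻¹`, and `α`, `β` lie on it, so conjugating the curve equation and
clearing denominators gives `(z · conj w)² = w²`. Hence `z · conj w = ±w` on `B`, with a sign
that is constant on the preconnected set `B` because `w ≠ 0` there. Since
`s₃(z, w) = (z, z · conj w)` when `|z| = 1`, the two signs are `s₃ = id` and `s₃ = T`.
-/

noncomputable section
open Complex ComplexConjugate

lemma mul_conj_exp_ofReal_mul_I (x : ℝ) : exp (x * I) * conj (exp (x * I)) = 1 := by
  rw [mul_conj', norm_exp_ofReal_mul_I]; norm_num

lemma bolzaAlpha_mul_conj : bolzaAlpha * conj bolzaAlpha = 1 := by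
  have h : (Real.pi * I / 4 : ℂ) = ((Real.pi / 4 : ℝ) : ℂ) * I := by push_cast; ring
  rw [bolzaAlpha, h, mul_conj_exp_ofReal_mul_I]

lemma bolzaBeta_mul_conj : bolzaBeta * conj bolzaBeta = 1 := by
  have h : (3 * Real.pi * I / 4 : ℂ) = ((3 * Real.pi / 4 : ℝ) : ℂ) * I := by push_cast; ring
  rw [bolzaBeta, h, mul_conj_exp_ofReal_mul_I]

lemma bolzaBeta_eq_I_mul_bolzaAlpha : bolzaBeta = I * bolzaAlpha := by
  have h : (3 * Real.pi * I / 4 : ℂ) = (Real.pi / 2 : ℝ) * I + Real.pi * I / 4 := by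
    push_cast; ring
  rw [bolzaBeta, bolzaAlpha, h, exp_add, exp_mul_I, ← ofReal_cos, ← ofReal_sin,
    Real.cos_pi_div_two, Real.sin_pi_div_two]
  simp

lemma bolzaAlpha_add_bolzaBeta_ne_zero : bolzaAlpha + bolzaBeta ≠ 0 := by
  have h1I : (1 + I : ℂ) ≠ 0 := by simp [Complex.ext_iff]
  rw [bolzaBeta_eq_I_mul_bolzaAlpha, ← one_add_mul]
  exact mul_ne_zero h1I (exp_ne_zero _)

lemma sq_mul_conj_eq_sq {a b z w : ℂ} (ha : a * conj a = 1) (hb : b * conj b = 1)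
    (hab : a + b ≠ 0) (hz : z * conj z = 1)
    (h : w ^ 2 * (z + a) * (z + b) = z * (z - a) * (z - b)) :
    (z * conj w) ^ 2 = w ^ 2 := by
  have hz0 : z ≠ 0 := left_ne_zero_of_mul_eq_one hz
  have ha0 : a ≠ 0 := left_ne_zero_of_mul_eq_one ha
  have hb0 : b ≠ 0 := left_ne_zero_of_mul_eq_one hb
  have hconj := congrArg conj h
  simp only [map_mul, map_add, map_sub, map_pow, eq_inv_of_mul_eq_one_right hz,
    eq_inv_of_mul_eq_one_right ha, eq_inv_of_mul_eq_one_right hb] at hconj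
  field_simp at hconj
  have hden : (z + a) * (z + b) ≠ 0 := by
    refine mul_ne_zero (fun hza ↦ hab ?_) (fun hzb ↦ hab ?_)
    · have hsum : 2 * a ^ 2 * (a + b) = 0 := by
        rw [eq_neg_of_add_eq_zero_left hza] at h; linear_combination h
      simpa [ha0] using hsum
    · have hsum : 2 * b ^ 2 * (a + b) = 0 := by
        rw [eq_neg_of_add_eq_zero_left hzb] at h; linear_combination h
      simpa [hb0] using hsum
  have key : ((z * conj w) ^ 2 - w ^ 2) * ((z + a) * (z + b)) = 0 := by
    linear_combination z * hconj - h
  exact sub_eq_zero.mp ((mul_eq_zero.mp key).resolve_right hden)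

lemma s3_eq_of_mul_conj_eq_one {p : ℂ × ℂ} (hp : p.1 * conj p.1 = 1) :
    s3 p = (p.1, p.1 * conj p.2) := by
  have hp0 : conj p.1 ≠ 0 := right_ne_zero_of_mul_eq_one hp
  simp only [s3, Prod.mk.injEq]
  constructor
  · rw [div_eq_iff hp0, hp]
  · rw [div_eq_iff hp0]; linear_combination -conj p.2 * hp

/-- On any preconnected subset of the Bolza curve lying over the unit circle and
avoiding `w = 0`, the symmetry `s₃` acts uniformly: it is either the identity
on all of it, or the hyperelliptic involution `T` on all of it. -/
theorem s3_uniform_on_preconnected (B : Set (ℂ × ℂ)) (hBP : B ⊆ BolzaCurve)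
    (hconn : IsPreconnected B)
    (hcirc : ∀ p ∈ B, p.1 * conj p.1 = 1 ∧ p.2 ≠ 0) :
    (∀ p ∈ B, s3 p = p) ∨ (∀ p ∈ B, s3 p = hypT p) := by
  have hsq : Set.EqOn ((fun p : ℂ × ℂ ↦ p.1 * conj p.2) ^ 2) ((fun p ↦ p.2) ^ 2) B :=
    fun p hp ↦ sq_mul_conj_eq_sq bolzaAlpha_mul_conj bolzaBeta_mul_conj
      bolzaAlpha_add_bolzaBeta_ne_zero (hcirc p hp).1 (hBP hp)
  obtain hfix | hflip := hconn.eq_or_eq_neg_of_sq_eq (by fun_prop) (by fun_prop) hsq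
    fun hp ↦ (hcirc _ hp).2
  · refine .inl fun p hp ↦ ?_
    rw [s3_eq_of_mul_conj_eq_one (hcirc p hp).1, show p.1 * conj p.2 = p.2 from hfix hp]
  · refine .inr fun p hp ↦ ?_
    rw [s3_eq_of_mul_conj_eq_one (hcirc p hp).1, show p.1 * conj p.2 = -p.2 from hflip hp]
    rfl

end
end

section
/- Fixed point sets of s₁ and of T∘s₁ on the Bolza curve (Proposition on fixed point sets, parts for s₁): for (z,w) ∈ P with w ≠ 0, one has s₁(z,w) = (z,w) if and only if z is real and Re z > 0 (i.e. z lies on the open positive real ray a₁); and T(s₁(z,w)) = (z,w) if and only if z is real and Re z < 0 (i.e. z lies on the open negative real ray a₃). In other words, Fix(s₁) is the full Π-preimage of a₁ and Fix(T∘s₁) is the full Π-preimage of a₃, away from points with w = 0. -/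
/-!
Since `conj α = -β` and `conj β = -α`, conjugating the curve equation at a real point `x`
exchanges its two sides up to `w ↦ conj w`; multiplying the equation by its conjugate and
cancelling `(x ± α)(x ± β) = x⁴ + 1 ≠ 0` gives `|w|⁴ = x²`, i.e. `|w|² = |x|`.
On the other hand `s₁(z,w) = (z,w)` says exactly that `z` is real and `z = w · conj w = |w|²`,
and `T(s₁(z,w)) = (z,w)` that `z` is real and `z = -|w|²`.
-/

noncomputable section
open Complex ComplexConjugate

lemma bolzaAlpha_sq : bolzaAlpha ^ 2 = I := by
  rw [bolzaAlpha, ← exp_nat_mul]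
  convert exp_pi_div_two_mul_I using 2
  push_cast
  ring

lemma bolzaBeta_sq : bolzaBeta ^ 2 = -I := by
  rw [← neg_neg bolzaBeta, ← conj_bolzaAlpha, neg_sq, ← map_pow, bolzaAlpha_sq, conj_I]

lemma normSq_eq_abs_of_mem_bolzaCurve {x : ℝ} {w : ℂ} (hP : ((x : ℂ), w) ∈ BolzaCurve) :
    normSq w = |x| := by
  have hP' : w ^ 2 * (x + bolzaAlpha) * (x + bolzaBeta)
      = x * (x - bolzaAlpha) * (x - bolzaBeta) := hP
  have hconj : conj w ^ 2 * (x - bolzaBeta) * (x - bolzaAlpha)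
      = x * (x + bolzaBeta) * (x + bolzaAlpha) := by
    simpa only [map_mul, map_pow, map_add, map_sub, conj_bolzaAlpha, conj_bolzaBeta, conj_ofReal,
      sub_neg_eq_add, ← sub_eq_add_neg] using congrArg conj hP'
  have hD : (x + bolzaAlpha) * (x + bolzaBeta) * (x - bolzaAlpha) * (x - bolzaBeta) = x ^ 4 + 1 :=
    calc _ = ((x : ℂ) ^ 2 - bolzaAlpha ^ 2) * (x ^ 2 - bolzaBeta ^ 2) := by ring
      _ = x ^ 4 + 1 := by rw [bolzaAlpha_sq, bolzaBeta_sq]; linear_combination -I_sq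
  have hprod : ((w * conj w) ^ 2 - x ^ 2) * (x ^ 4 + 1) = 0 := by
    linear_combination (conj w ^ 2 * (x - bolzaAlpha) * (x - bolzaBeta)) * hP'
      + x * (x - bolzaAlpha) * (x - bolzaBeta) * hconj - ((w * conj w) ^ 2 - x ^ 2) * hD
  have hx4 : (x : ℂ) ^ 4 + 1 ≠ 0 := by exact_mod_cast (by positivity : x ^ 4 + 1 ≠ 0)
  have hsq : normSq w ^ 2 = |x| ^ 2 := by
    rw [sq_abs]
    have h := sub_eq_zero.mp ((mul_eq_zero.mp hprod).resolve_right hx4)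
    rw [mul_conj] at h
    exact_mod_cast h
  exact (sq_eq_sq₀ (normSq_nonneg w) (abs_nonneg x)).mp hsq

lemma s1_eq_self_iff {z w : ℂ} (hw : w ≠ 0) :
    s1 (z, w) = (z, w) ↔ conj z = z ∧ z = normSq w := by
  simp only [s1, Prod.mk.injEq]
  refine and_congr_right fun hz => ?_
  rw [hz, div_eq_iff ((map_ne_zero conj).mpr hw), mul_conj]

lemma hypT_s1_eq_self_iff {z w : ℂ} (hw : w ≠ 0) :
    hypT (s1 (z, w)) = (z, w) ↔ conj z = z ∧ z = -normSq w := by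
  simp only [hypT, s1, Prod.mk.injEq]
  refine and_congr_right fun hz => ?_
  rw [hz, neg_eq_iff_eq_neg, div_eq_iff ((map_ne_zero conj).mpr hw), neg_mul, mul_conj]

/-- Fixed point sets of `s₁` and of `T∘s₁` on the Bolza curve: away from `w = 0`,
`Fix(s₁)` is the preimage of the open positive real ray `a₁` under the projection
`Π(z,w) = z`, and `Fix(T∘s₁)` is the preimage of the open negative real ray `a₃`. -/
theorem fix_s1 (z w : ℂ) (hP : (z, w) ∈ BolzaCurve) (hw : w ≠ 0) :
    (s1 (z, w) = (z, w) ↔ conj z = z ∧ 0 < z.re) ∧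
    (hypT (s1 (z, w)) = (z, w) ↔ conj z = z ∧ z.re < 0) := by
  have hpos : 0 < normSq w := normSq_pos.mpr hw
  rw [s1_eq_self_iff hw, hypT_s1_eq_self_iff hw]
  constructor <;> refine and_congr_right fun hz => ?_ <;>
    obtain ⟨x, rfl⟩ := conj_eq_iff_real.mp hz <;>
    rw [normSq_eq_abs_of_mem_bolzaCurve hP] at hpos ⊢ <;>
    simp only [ofReal_re, ← ofReal_neg, ofReal_inj]
  · exact ⟨fun h => h ▸ hpos, fun h => (abs_of_pos h).symm⟩
  · exact ⟨fun h => by linarith, fun h => by rw [abs_of_neg h, neg_neg]⟩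

end
end

section
/- Fixed point sets of s₂ and of T∘s₂ on the Bolza curve (Proposition on fixed point sets, parts for s₂): for (z,w) ∈ P with w ≠ 0, one has s₂(z,w) = (z,w) if and only if z is purely imaginary with Im z > 0 (i.e. z lies on the open positive imaginary ray a₂); and T(s₂(z,w)) = (z,w) if and only if z is purely imaginary with Im z < 0 (i.e. z lies on the open negative imaginary ray a₄). In other words, Fix(s₂) is the full Π-preimage of a₂ and Fix(T∘s₂) is the full Π-preimage of a₄, away from points with w = 0. -/
noncomputable section
open Complex ComplexConjugate

/-! On the imaginary axis `z = t i` one has `(z ± α)(z ± β) = z² ± √2 i z − 1 = −(t² ± √2 t + 1)`,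
and both quadratics in `t` are positive, so the curve equation reads `w² = c i` with `c` real
of the sign of `t`. For `w ≠ 0` with `w² = c i`, `i w̄ = w` forces `w² = i |w|²`, i.e. `c > 0`,
and conversely; the case `i w̄ = −w` reduces to this one by replacing `w` with `i w`. -/

lemma bolzaAlpha_eq : bolzaAlpha = (Real.sqrt 2 / 2 : ℝ) * (1 + I) := by
  rw [bolzaAlpha, show (Real.pi : ℂ) * I / 4 = (Real.pi / 4 : ℝ) * I by push_cast; ring,
    exp_mul_I, ← ofReal_cos, ← ofReal_sin, Real.cos_pi_div_four, Real.sin_pi_div_four]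
  ring

lemma bolzaBeta_eq : bolzaBeta = bolzaAlpha * I := by
  have h := Complex.exp_add (Real.pi * I / 4) (Real.pi / 2 * I)
  rw [exp_pi_div_two_mul_I] at h
  rw [bolzaAlpha, bolzaBeta, ← h]
  ring_nf

lemma bolzaAlpha_add_bolzaBeta : bolzaAlpha + bolzaBeta = Real.sqrt 2 * I := by
  rw [bolzaBeta_eq, bolzaAlpha_eq]
  push_cast
  linear_combination (Real.sqrt 2 / 2 : ℂ) * I_sq

lemma bolzaAlpha_mul_bolzaBeta : bolzaAlpha * bolzaBeta = -1 := by
  have hsqrt : (Real.sqrt 2 : ℂ) ^ 2 = 2 := by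
    exact_mod_cast Real.sq_sqrt zero_le_two
  rw [bolzaBeta_eq, bolzaAlpha_eq]
  push_cast
  linear_combination (Real.sqrt 2 : ℂ) ^ 2 / 4 * (2 + I) * I_sq - (1 / 2 : ℂ) * hsqrt

lemma mem_bolzaCurve_iff {z w : ℂ} :
    (z, w) ∈ BolzaCurve ↔
      w ^ 2 * (z ^ 2 + Real.sqrt 2 * I * z - 1) = z * (z ^ 2 - Real.sqrt 2 * I * z - 1) := by
  have hsum := bolzaAlpha_add_bolzaBeta
  have hprod := bolzaAlpha_mul_bolzaBeta
  change _ = _ ↔ _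
  constructor <;> intro h
  · linear_combination h - (w ^ 2 * z + z ^ 2) * hsum + (z - w ^ 2) * hprod
  · linear_combination h + (w ^ 2 * z + z ^ 2) * hsum - (z - w ^ 2) * hprod

lemma exists_sq_eq_mul_I_of_mem_bolzaCurve {t : ℝ} {w : ℂ} (h : ((t : ℂ) * I, w) ∈ BolzaCurve) :
    ∃ q : ℝ, 0 < q ∧ w ^ 2 = (t * q : ℝ) * I := by
  rw [mem_bolzaCurve_iff] at h
  set s := Real.sqrt 2
  have hs : s ^ 2 = 2 := Real.sq_sqrt zero_le_two
  have hA : 0 < t ^ 2 + s * t + 1 := by nlinarith [sq_nonneg (2 * t + s)]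
  have hB : 0 < t ^ 2 - s * t + 1 := by nlinarith [sq_nonneg (2 * t - s)]
  refine ⟨(t ^ 2 - s * t + 1) / (t ^ 2 + s * t + 1), div_pos hB hA, ?_⟩
  have hA' : ((t ^ 2 + s * t + 1 : ℝ) : ℂ) ≠ 0 := ofReal_ne_zero.2 hA.ne'
  push_cast at hA' ⊢
  rw [mul_div_assoc', div_mul_eq_mul_div, eq_div_iff hA']
  linear_combination -h + (w ^ 2 * (t ^ 2 + s * t) - t * I * (t ^ 2 - s * t)) * I_sq

lemma I_mul_conj_eq_self_iff {w : ℂ} (hw : w ≠ 0) {c : ℝ} (h : w ^ 2 = c * I) :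
    I * conj w = w ↔ 0 < c := by
  constructor
  · intro hfix
    have hc : (c : ℂ) = normSq w :=
      mul_right_cancel₀ I_ne_zero (by linear_combination -h - w * hfix + I * mul_conj w)
    rw [show c = normSq w by exact_mod_cast hc]
    exact normSq_pos.2 hw
  · intro hc
    have hnorm : (normSq w : ℂ) = c := by
      rw [normSq_eq_norm_sq, ← norm_pow, h, norm_mul, norm_I, norm_real,
        Real.norm_of_nonneg hc.le, mul_one]
    have hfac : w * (w - I * conj w) = 0 := by
      linear_combination h - I * mul_conj w - I * hnorm
    exact (sub_eq_zero.1 ((mul_eq_zero.1 hfac).resolve_left hw)).symm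

lemma I_mul_conj_eq_neg_iff {w : ℂ} (hw : w ≠ 0) {c : ℝ} (h : w ^ 2 = c * I) :
    I * conj w = -w ↔ c < 0 := by
  have hIw : (I * w) ^ 2 = ((-c : ℝ) : ℂ) * I := by
    push_cast
    linear_combination w ^ 2 * I_sq - h
  rw [← neg_pos, ← I_mul_conj_eq_self_iff (mul_ne_zero I_ne_zero hw) hIw, map_mul, conj_I]
  constructor <;> intro h'
  · linear_combination -I * h'
  · linear_combination I * h' + (I * conj w + w) * I_sq

lemma eq_im_mul_I_of_neg_conj_eq {z : ℂ} (h : -conj z = z) : z = z.im * I := by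
  have hre : -z.re = z.re := by simpa using congrArg re h
  apply Complex.ext <;> simp [show z.re = 0 by linarith]

/-- Fixed point sets of `s₂` and of `T∘s₂` on the Bolza curve: away from `w = 0`,
`Fix(s₂)` is the preimage of the open positive imaginary ray `a₂` under the
projection `Π(z,w) = z`, and `Fix(T∘s₂)` is the preimage of the open negative
imaginary ray `a₄`. -/
theorem fix_s2 (z w : ℂ) (hP : (z, w) ∈ BolzaCurve) (hw : w ≠ 0) :
    (s2 (z, w) = (z, w) ↔ -conj z = z ∧ 0 < z.im) ∧
    (hypT (s2 (z, w)) = (z, w) ↔ -conj z = z ∧ z.im < 0) := by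
  have onAxis (hz : -conj z = z) : (I * conj w = w ↔ 0 < z.im) ∧ (-(I * conj w) = w ↔ z.im < 0) := by
    rw [eq_im_mul_I_of_neg_conj_eq hz] at hP
    obtain ⟨q, hq, hw2⟩ := exists_sq_eq_mul_I_of_mem_bolzaCurve hP
    exact ⟨(I_mul_conj_eq_self_iff hw hw2).trans (mul_pos_iff_of_pos_right hq),
      neg_eq_iff_eq_neg.trans <| (I_mul_conj_eq_neg_iff hw hw2).trans
        ⟨fun h => neg_of_mul_neg_left h hq.le, fun h => mul_neg_of_neg_of_pos h hq⟩⟩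
  simp only [s2, hypT, Prod.mk.injEq]
  exact ⟨and_congr_right fun hz => (onAxis hz).1, and_congr_right fun hz => (onAxis hz).2⟩

end
end

section
/- Fixed point sets of s₃ and of T∘s₃ on the Bolza curve (Proposition on fixed point sets, parts for s₃): for (z,w) ∈ P with w ≠ 0, one has s₃(z,w) = (z,w) if and only if |z| = 1 and Re(z²) < 0 (i.e. z lies on the open unit-circle arcs a₆ ∪ a₈ around i and −i); and T(s₃(z,w)) = (z,w) if and only if |z| = 1 and Re(z²) > 0 (i.e. z lies on the open unit-circle arcs a₅ ∪ a₇ around 1 and −1). In other words, Fix(s₃) is the full Π-preimage of a₆ ∪ a₈ and Fix(T∘s₃) is the full Π-preimage of a₅ ∪ a₇, away from points with w = 0. -/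
noncomputable section
open Complex ComplexConjugate

lemma halpha : bolzaAlpha = (Real.sqrt 2 : ℂ)/2 * (1 + I) := by
  rw [bolzaAlpha, show (↑Real.pi * I / 4 : ℂ) = (↑(Real.pi/4) : ℝ) * I by push_cast; ring]
  rw [Complex.exp_mul_I, ← Complex.ofReal_cos, ← Complex.ofReal_sin,
    Real.cos_pi_div_four, Real.sin_pi_div_four]
  push_cast; ring

lemma hbeta : bolzaBeta = (Real.sqrt 2 : ℂ)/2 * (-1 + I) := by
  rw [bolzaBeta, show (3 * ↑Real.pi * I / 4 : ℂ) = (↑(Real.pi - Real.pi/4) : ℝ) * I by push_cast; ring]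
  rw [Complex.exp_mul_I, ← Complex.ofReal_cos, ← Complex.ofReal_sin,
    Real.cos_pi_sub, Real.sin_pi_sub, Real.cos_pi_div_four, Real.sin_pi_div_four]
  push_cast; ring

lemma bolza_key_s16 (z w : ℂ) (hP : (z, w) ∈ BolzaCurve) (hz : z * conj z = 1) :
    w ^ 2 * (2 * (z.im : ℂ) + (Real.sqrt 2 : ℂ)) = z * (2 * (z.im : ℂ) - (Real.sqrt 2 : ℂ)) := by
  have hP0 : w ^ 2 * (z + bolzaAlpha) * (z + bolzaBeta) = z * (z - bolzaAlpha) * (z - bolzaBeta) := hP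
  rw [halpha, hbeta] at hP0
  have hs2 : ((Real.sqrt 2 : ℝ) : ℂ) ^ 2 = 2 := by
    rw [← Complex.ofReal_pow, Real.sq_sqrt (by norm_num : (2:ℝ) ≥ 0)]; norm_num
  have hI : (I : ℂ) ^ 2 = -1 := Complex.I_sq
  have hconj : z - conj z = (2 * z.im : ℝ) * I := Complex.sub_conj z
  push_cast at hconj
  have hz0 : z ≠ 0 := by
    intro h; rw [h] at hz; simp at hz
  have h1 : (w ^ 2 * (2 * (z.im : ℂ) + (Real.sqrt 2 : ℂ))
      - z * (2 * (z.im : ℂ) - (Real.sqrt 2 : ℂ))) * (z * I) = 0 := by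
    linear_combination hP0 + (z ^ 2 - w ^ 2 * z) * hconj + (z - w ^ 2) * hz
      + ((w ^ 2 - z) / 4 * (I ^ 2 - 1) + (w ^ 2 - z)) * hs2
      + ((w ^ 2 - z) / 2 - (w ^ 2 - z) * ((Real.sqrt 2 : ℂ)) ^ 2 / 2) * hI
  have h2 := mul_eq_zero.mp h1
  rcases h2 with h | h
  · exact sub_eq_zero.mp h
  · exact absurd h (mul_ne_zero hz0 Complex.I_ne_zero)

lemma cond_pos (z w : ℂ) (hz : z * conj z = 1) (hw : w ≠ 0) :
    conj w / conj z = w ↔ w ^ 2 = (Complex.normSq w : ℂ) * z := by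
  have hcz : conj z ≠ 0 := by
    intro h; rw [h, mul_zero] at hz; exact one_ne_zero hz.symm
  constructor
  · intro h
    have h' : conj w = w * conj z := (div_eq_iff hcz).mp h
    have h2 : (Complex.normSq w : ℂ) = w ^ 2 * conj z := by
      rw [← Complex.mul_conj]; linear_combination w * h'
    linear_combination -z * h2 - w ^ 2 * hz
  · intro h
    rw [div_eq_iff hcz]
    refine mul_left_cancel₀ hw ?_
    have hm : w * conj w = w ^ 2 * conj z := by
      rw [Complex.mul_conj]
      linear_combination -conj z * h - (Complex.normSq w : ℂ) * hz
    linear_combination hm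

lemma cond_neg (z w : ℂ) (hz : z * conj z = 1) (hw : w ≠ 0) :
    -(conj w / conj z) = w ↔ w ^ 2 = -(Complex.normSq w : ℂ) * z := by
  have hcz : conj z ≠ 0 := by
    intro h; rw [h, mul_zero] at hz; exact one_ne_zero hz.symm
  constructor
  · intro h
    have h' : -conj w = w * conj z := by
      rw [← neg_div, div_eq_iff hcz] at h
      exact h
    have h2 : -(Complex.normSq w : ℂ) = w ^ 2 * conj z := by
      rw [← Complex.mul_conj]; linear_combination w * h'
    linear_combination -z * h2 - w ^ 2 * hz
  · intro h
    rw [← neg_div, div_eq_iff hcz]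
    refine mul_left_cancel₀ hw ?_
    have hm : w * conj w = -(w ^ 2 * conj z) := by
      rw [Complex.mul_conj]
      linear_combination conj z * h - (Complex.normSq w : ℂ) * hz
    linear_combination -hm

lemma core (z w : ℂ) (hP : (z, w) ∈ BolzaCurve) (hw : w ≠ 0) (hz : z * conj z = 1) :
    (w ^ 2 = (Complex.normSq w : ℂ) * z ↔ (z ^ 2).re < 0) ∧
    (w ^ 2 = -(Complex.normSq w : ℂ) * z ↔ 0 < (z ^ 2).re) := by
  have hs_pos : (0:ℝ) < Real.sqrt 2 := Real.sqrt_pos.mpr (by norm_num)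
  have hs2 : (Real.sqrt 2) ^ 2 = 2 := Real.sq_sqrt (by norm_num)
  have hz0 : z ≠ 0 := fun h => by rw [h] at hz; simp at hz
  have key := bolza_key_s16 z w hP hz
  set s := Real.sqrt 2 with hsdef
  set y := z.im with hydef
  have hn : Complex.normSq z = 1 := by
    have h := Complex.mul_conj z
    rw [hz] at h
    exact_mod_cast h.symm
  have hre : (z ^ 2).re = 1 - 2 * y ^ 2 := by
    have h1 : z.re * z.re + z.im * z.im = 1 := by
      simpa [Complex.normSq_apply] using hn
    simp only [pow_two, Complex.mul_re]
    nlinarith [h1]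
  have hA : (2 * y + s) ≠ 0 := by
    intro h0
    have hc : (2 * (y:ℂ) + (s:ℂ)) = 0 := by exact_mod_cast congrArg (fun t : ℝ => (t : ℂ)) h0
    rw [hc, mul_zero] at key
    have h3 : (2 * (y:ℂ) - (s:ℂ)) = 0 := by
      rcases mul_eq_zero.mp key.symm with h | h
      · exact absurd h hz0
      · exact h
    have h4 : 2 * y - s = 0 := by exact_mod_cast h3
    linarith
  have hAc : (2 * (y:ℂ) + (s:ℂ)) ≠ 0 := by
    intro h; exact hA (by exact_mod_cast h)
  set r : ℝ := (2 * y - s) / (2 * y + s) with hrdef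
  have hq : r * (2 * y + s) = 2 * y - s := by rw [hrdef]; field_simp
  have hrc : ((r:ℝ):ℂ) * (2 * (y:ℂ) + (s:ℂ)) = 2 * (y:ℂ) - (s:ℂ) := by
    exact_mod_cast congrArg (fun t : ℝ => (t : ℂ)) hq
  have h2 : (w ^ 2 - (r:ℂ) * z) * (2 * (y:ℂ) + (s:ℂ)) = 0 := by
    linear_combination key - z * hrc
  have hrz : w ^ 2 = (r:ℂ) * z := by
    rcases mul_eq_zero.mp h2 with h | h
    · exact sub_eq_zero.mp h
    · exact absurd h hAc
  have hA2 : 0 < (2 * y + s) ^ 2 := lt_of_le_of_ne (sq_nonneg _) (Ne.symm (pow_ne_zero 2 hA))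
  have hr_sign : r * (2 * y + s) ^ 2 = -2 * (z ^ 2).re := by
    rw [hre]; linear_combination (2 * y + s) * hq - hs2
  have hnsq : (Complex.normSq w) ^ 2 = r ^ 2 := by
    have h1 : Complex.normSq (w ^ 2) = Complex.normSq ((r:ℂ) * z) := by rw [hrz]
    rw [map_pow, Complex.normSq_mul, Complex.normSq_ofReal, hn] at h1
    nlinarith [h1]
  have hnn : 0 ≤ Complex.normSq w := Complex.normSq_nonneg w
  have hnw : 0 < Complex.normSq w := Complex.normSq_pos.mpr hw
  constructor
  · constructor
    · intro h
      have hc : ((Complex.normSq w : ℝ):ℂ) * z = (r:ℂ) * z := by rw [← h, hrz]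
      have hc2 : ((Complex.normSq w : ℝ):ℂ) = (r:ℂ) := mul_right_cancel₀ hz0 hc
      have hnr : Complex.normSq w = r := by exact_mod_cast hc2
      nlinarith [hr_sign, hA2, hnr, hnw]
    · intro h
      have hrpos : 0 < r := by nlinarith [hr_sign, hA2]
      have hnr : Complex.normSq w = r := le_antisymm (by nlinarith) (by nlinarith)
      rw [hrz, hnr]
  · constructor
    · intro h
      have hc : (-(Complex.normSq w : ℂ)) * z = (r:ℂ) * z := by rw [← h, hrz]
      have hc2 : (-(Complex.normSq w : ℂ)) = (r:ℂ) := mul_right_cancel₀ hz0 hc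
      have hnr : -Complex.normSq w = r := by exact_mod_cast hc2
      nlinarith [hr_sign, hA2, hnr, hnw]
    · intro h
      have hrneg : r < 0 := by nlinarith [hr_sign, hA2]
      have hnr : Complex.normSq w = -r := le_antisymm (by nlinarith) (by nlinarith)
      rw [hrz, show ((r:ℝ):ℂ) = -((Complex.normSq w : ℝ):ℂ) by rw [hnr]; push_cast; ring]


/-- Fixed point sets of `s₃` and of `T∘s₃` on the Bolza curve: away from `w = 0`,
`Fix(s₃)` is the preimage of the open unit-circle arcs `a₆ ∪ a₈` (around `i` and
`−i`, where `Re(z²) < 0`) under the projection `Π(z,w) = z`, and `Fix(T∘s₃)` is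
the preimage of the arcs `a₅ ∪ a₇` (around `1` and `−1`, where `Re(z²) > 0`). -/
theorem fix_s3 (z w : ℂ) (hP : (z, w) ∈ BolzaCurve) (hw : w ≠ 0) :
    (s3 (z, w) = (z, w) ↔ z * conj z = 1 ∧ (z ^ 2).re < 0) ∧
    (hypT (s3 (z, w)) = (z, w) ↔ z * conj z = 1 ∧ 0 < (z ^ 2).re) := by
  constructor
  · constructor
    · intro h
      have h1 : 1 / conj z = z := congrArg Prod.fst h
      have h2 : conj w / conj z = w := congrArg Prod.snd h
      have hz0 : z ≠ 0 := by
        intro h0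
        rw [h0] at h2
        simp at h2
        exact hw h2.symm
      have hcz : conj z ≠ 0 := by simpa using hz0
      have hz : z * conj z = 1 := by
        rw [div_eq_iff hcz] at h1
        exact h1.symm
      exact ⟨hz, ((core z w hP hw hz).1).mp ((cond_pos z w hz hw).mp h2)⟩
    · rintro ⟨hz, hre⟩
      have hcz : conj z ≠ 0 := by
        intro h; rw [h, mul_zero] at hz; exact one_ne_zero hz.symm
      have h2 := (cond_pos z w hz hw).mpr (((core z w hP hw hz).1).mpr hre)
      have h1 : (1:ℂ) / conj z = z := by rw [div_eq_iff hcz]; linear_combination -hz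
      simp only [s3, Prod.mk.injEq]
      exact ⟨h1, h2⟩
  · constructor
    · intro h
      have h1 : 1 / conj z = z := congrArg Prod.fst h
      have h2 : -(conj w / conj z) = w := congrArg Prod.snd h
      have hz0 : z ≠ 0 := by
        intro h0
        rw [h0] at h2
        simp at h2
        exact hw h2.symm
      have hcz : conj z ≠ 0 := by simpa using hz0
      have hz : z * conj z = 1 := by
        rw [div_eq_iff hcz] at h1
        exact h1.symm
      have := (cond_neg z w hz hw).mp h2
      refine ⟨hz, ((core z w hP hw hz).2).mp ?_⟩
      linear_combination this
    · rintro ⟨hz, hre⟩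
      have hcz : conj z ≠ 0 := by
        intro h; rw [h, mul_zero] at hz; exact one_ne_zero hz.symm
      have hcore := ((core z w hP hw hz).2).mpr hre
      have h2 := (cond_neg z w hz hw).mpr (by linear_combination hcore)
      have h1 : (1:ℂ) / conj z = z := by rw [div_eq_iff hcz]; linear_combination -hz
      simp only [hypT, s3, Prod.mk.injEq]
      exact ⟨h1, h2⟩


end
end
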